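/- Conversely, let F' be an (n, k+1)-choice parallel DT-BFDS with individual function selection in which, for every node, the (k+1)-st function choice is the identity function. Then every single parallel step of F' from configuration u to configuration v is realizable by a single asynchronous step of the (n,k) system F (obtained by removing the identity choices): namely, by updating concurrently exactly the set of nodes whose chosen index in the parallel step was not k+1, using the same function choices. Hence the edge from u to v exists in F's asynchronous configuration graph. -/

import Mathlib

/-- Update the nodes in the set `S` concurrently, using the selection `g`
of function indices for the nodes of `S`, all other nodes keeping their states. -/
def applyGroup {n k : ℕ} (f : Fin n → Fin k → (Fin n → Bool) → Bool)
    (S : Finset (Fin n)) (g : ∀ i : Fin n, i ∈ S → Fin k) (c : Fin n → Bool) :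
    Fin n → Bool :=
  fun i => if h : i ∈ S then f i (g i h) c else c i

/-- One asynchronous step of the `(n,k)` system `f`: some subset `S` of nodes
updates concurrently with some function selection, the rest keep their states. -/
def AsyncStep {n k : ℕ} (f : Fin n → Fin k → (Fin n → Bool) → Bool)
    (a b : Fin n → Bool) : Prop :=
  ∃ (S : Finset (Fin n)) (g : ∀ i : Fin n, i ∈ S → Fin k), b = applyGroup f S g a

section ParallelStep

variable {n k : ℕ} (f : Fin n → Fin k → (Fin n → Bool) → Bool)

/-- A parallel step of the `(n, k+1)` system extending `f`, in which the index `k`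
(the `(k+1)`-st choice) stands for the identity function. -/
def parallelStepWithIdentity (J : Fin n → Fin (k + 1)) (u : Fin n → Bool) : Fin n → Bool :=
  fun i => if h : (J i : ℕ) < k then f i ⟨J i, h⟩ u else u i

def activeNodes (J : Fin n → Fin (k + 1)) : Finset (Fin n) :=
  Finset.univ.filter fun i => (J i : ℕ) < k

lemma mem_activeNodes {J : Fin n → Fin (k + 1)} {i : Fin n} :
    i ∈ activeNodes J ↔ (J i : ℕ) < k := by
  simp [activeNodes]

theorem parallelStepWithIdentity_eq_applyGroup (J : Fin n → Fin (k + 1)) (u : Fin n → Bool)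
    (g : ∀ i, i ∈ activeNodes J → Fin k) (hg : ∀ i h, g i h = ⟨J i, mem_activeNodes.mp h⟩) :
    parallelStepWithIdentity f J u = applyGroup f (activeNodes J) g u := by
  funext i
  by_cases hi : (J i : ℕ) < k
  · have hmem : i ∈ activeNodes J := mem_activeNodes.mpr hi
    simp only [parallelStepWithIdentity, applyGroup, dif_pos hi, dif_pos hmem, hg i hmem]
  · have hmem : i ∉ activeNodes J := mt mem_activeNodes.mp hi
    simp only [parallelStepWithIdentity, applyGroup, dif_neg hi, dif_neg hmem]

theorem asyncStep_parallelStepWithIdentity (J : Fin n → Fin (k + 1)) (u : Fin n → Bool) :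
    AsyncStep f u (parallelStepWithIdentity f J u) :=
  ⟨_, _, parallelStepWithIdentity_eq_applyGroup f J u _ fun _ _ => rfl⟩

end ParallelStep

theorem stmt_11 (n k : ℕ) (f : Fin n → Fin k → (Fin n → Bool) → Bool)
    (u v : Fin n → Bool)
    -- a parallel step of `F'` with selection `J`, where index values `≥ k`
    -- (i.e. the `(k+1)`-st choice) denote the identity function
    (J : Fin n → Fin (k + 1))
    (hstep : ∀ i, v i = if h : (J i : ℕ) < k then f i ⟨J i, h⟩ u else u i) :
    -- the asynchronous step updating concurrently exactly the nodes whose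
    -- chosen index was not the identity, with the same function choices,
    -- realizes the transition from u to v
    (∀ g : ∀ i : Fin n, i ∈ Finset.univ.filter (fun i => (J i : ℕ) < k) → Fin k,
        (∀ i h, g i h = ⟨J i, by simpa using h⟩) →
        v = applyGroup f (Finset.univ.filter (fun i => (J i : ℕ) < k)) g u) ∧
    AsyncStep f u v := by
  obtain rfl : v = parallelStepWithIdentity f J u := funext hstep
  exact ⟨parallelStepWithIdentity_eq_applyGroup f J u, asyncStep_parallelStepWithIdentity f J u⟩
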